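/- arXiv:1506.07949 — 4 statements merged into one kernel-verified Lean document; each statement's English description precedes it below -/
import Mathlib

section
/- Let D be a strong balanced bipartite digraph on 2a vertices, where a ≥ 2. Suppose that for every dominating pair of vertices {x, y} of D, either d(x) ≥ 2a−1 and d(y) ≥ a+1, or d(y) ≥ 2a−1 and d(x) ≥ a+1. Then D contains a hamiltonian cycle. -/
/-- The degree of a vertex `x` in the digraph with arc relation `A`:
number of out-neighbours plus number of in-neighbours. -/
noncomputable def deg {V : Type*} (A : V → V → Prop) (x : V) : ℕ :=
  Nat.card {y : V // A x y} + Nat.card {y : V // A y x}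

/-- A digraph is strong if for every ordered pair of vertices there is a directed path. -/
def IsStrong {V : Type*} (A : V → V → Prop) : Prop :=
  ∀ x y : V, Relation.ReflTransGen A x y

/-- `{x, y}` is a dominating pair: `x ≠ y` and some vertex `z` is dominated by both. -/
def DominatingPair {V : Type*} (A : V → V → Prop) (x y : V) : Prop :=
  x ≠ y ∧ ∃ z, A x z ∧ A y z

/-- `{x, y}` is a dominated pair: `x ≠ y` and some vertex `z` dominates both. -/
def DominatedPair {V : Type*} (A : V → V → Prop) (x y : V) : Prop :=
  x ≠ y ∧ ∃ z, A z x ∧ A z y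

/-- `V1`, `V2` form a bipartition of the digraph `A`: every vertex lies in exactly
one of them and both are independent sets. -/
def IsBipartition {V : Type*} (A : V → V → Prop) (V1 V2 : Finset V) : Prop :=
  (∀ v : V, v ∈ V1 ∨ v ∈ V2) ∧ Disjoint V1 V2 ∧
  (∀ x ∈ V1, ∀ y ∈ V1, ¬ A x y) ∧ (∀ x ∈ V2, ∀ y ∈ V2, ¬ A x y)

/-- A digraph is hamiltonian iff there is a permutation `σ` of the vertices with an arc
from each vertex to its successor, and all vertices lie on one cycle of `σ`. -/
def IsHamiltonian {V : Type*} (A : V → V → Prop) : Prop :=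
  ∃ σ : Equiv.Perm V, (∀ v, A v (σ v)) ∧ ∀ v w : V, σ.SameCycle v w

/-- A digraph has a cycle factor iff there is a permutation `σ` of the vertices with an arc
from each vertex to its successor (the cycles of `σ` are then vertex-disjoint directed
cycles covering all vertices; there are no loops in a bipartite digraph, so no fixed points). -/
def HasCycleFactor {V : Type*} (A : V → V → Prop) : Prop :=
  ∃ σ : Equiv.Perm V, ∀ v, A v (σ v)

/-- A perfect matching from `S` to `T`: a choice, for each vertex of `S`, of an arc
to a vertex of `T`, no two arcs sharing a head. -/
def IsPerfectMatchingFromTo {V : Type*} (A : V → V → Prop) (S T : Finset V) : Prop :=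
  ∃ f : V → V, Set.InjOn f ↑S ∧ ∀ x ∈ S, f x ∈ T ∧ A x (f x)

/-- Isomorphism of digraphs. -/
def DigraphIso {V W : Type*} (A : V → V → Prop) (B : W → W → Prop) : Prop :=
  ∃ e : V ≃ W, ∀ x y : V, A x y ↔ B (e x) (e y)

/-- The digraph `H1`, with `x1 = 0`, `x2 = 1`, `y1 = 2`, `y2 = 3`.
Arcs: `x1 ↔ y1`, `x2 ↔ y1`, `x2 ↔ y2`. -/
def H1Adj : Fin 4 → Fin 4 → Prop := fun i j =>
  (i, j) ∈ ([(0, 2), (2, 0), (1, 2), (2, 1), (1, 3), (3, 1)] : List (Fin 4 × Fin 4))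

/-- The digraph `H2` (two variants, indexed by `b : Bool`), with `x1 = 0`, `x2 = 1`,
`x3 = 2`, `y1 = 3`, `y2 = 4`, `y3 = 5`. Arcs: the 2-cycles `x1 ↔ y1`, `x2 ↔ y1`,
`x3 ↔ y2`, `x3 ↔ y3`, the arcs `y2 → x1`, `y2 → x2`, `y3 → x1`, `y3 → x2`, `y1 → x3`,
and (iff `b = true`) the arc `x3 → y1`. -/
def H2Adj (b : Bool) : Fin 6 → Fin 6 → Prop := fun i j =>
  (i, j) ∈ ([(0, 3), (3, 0), (1, 3), (3, 1), (2, 4), (4, 2), (2, 5), (5, 2),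
             (4, 0), (4, 1), (5, 0), (5, 1), (3, 2)] : List (Fin 6 × Fin 6)) ∨
  (b = true ∧ (i, j) = (2, 3))

/-- The digraph `H3`, with `x1 = 0`, `x2 = 1`, `x3 = 2`, `y1 = 3`, `y2 = 4`, `y3 = 5`.
Arcs: the directed 4-cycle `x1 → y1 → x2 → y2 → x1`, and the 2-cycles
`x3 ↔ y1`, `x3 ↔ y2`, `y3 ↔ x1`, `y3 ↔ x2`. -/
def H3Adj : Fin 6 → Fin 6 → Prop := fun i j =>
  (i, j) ∈ ([(0, 3), (3, 1), (1, 4), (4, 0),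
             (2, 3), (3, 2), (2, 4), (4, 2),
             (5, 0), (0, 5), (5, 1), (1, 5)] : List (Fin 6 × Fin 6))

/-!
By Hall's theorem the degree condition yields a cycle factor `σ` (a permutation with `v → σ v`
for every `v`); take one with the fewest pairs of vertices on different cycles. If `u` and `v`
lie on different cycles with `u → σ v` and `v → σ u`, then `σ * swap u v` is a cycle factor in
which the two cycles are merged, so the chosen `σ` has no such *bridge*.

It remains to see that a bridgeless cycle factor is a single cycle. Call a vertex big if its
degree is at least `2a - 1`. Of two vertices with a common out-neighbour one is big, so every
vertex has at most one in-neighbour that is not big, and a big vertex misses at most one of the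
`2a` possible arcs to and from the other side. Each vertex `x` off the cycle of `z` with
`x → σ z` gives, by the absence of bridges, a vertex `σ x` with `z ↛ σ x`; this bounds the
degrees along cycles through big vertices. For `a ≥ 3` it follows that no big vertex lies on a
`2`-cycle, that all big vertices lie on one cycle `C`, and that `C` misses one or two vertices
of each side; both cases are excluded by following an arc between `C` and its complement,
which exists as the digraph is strong. The case `a = 2` is a direct check.
-/

open Finset Equiv

open scoped Classical

theorem Finset.card_filter_le_card_filter_add {α : Type*} (s : Finset α) (p q : α → Prop)
    [DecidablePred p] [DecidablePred q] :
    #{x ∈ s | q x} ≤ #{x ∈ s | p x} + #{x ∈ s | ¬p x ∧ q x} :=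
  (card_le_card fun x hx => by by_cases hp : p x <;> simp_all).trans (card_union_le _ _)

theorem Finset.card_filter_add_card_filter_le {α : Type*} {s : Finset α} {p q : α → Prop}
    [DecidablePred p] [DecidablePred q] (h : ∀ x ∈ s, p x → ¬q x) :
    #{x ∈ s | p x} + #{x ∈ s | q x} ≤ #s := by
  rw [← card_union_of_disjoint (disjoint_filter.2 h)]
  exact card_le_card (union_subset (filter_subset _ _) (filter_subset _ _))

theorem IsStrong.exists_adj {V : Type*} {A : V → V → Prop} (hA : IsStrong A) {P : V → Prop}
    {p q : V} (hp : P p) (hq : ¬P q) : ∃ u v, P u ∧ ¬P v ∧ A u v := by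
  induction hA p q with
  | refl => exact absurd hp hq
  | @tail b c _ hbc ih =>
    by_cases hb : P b
    · exact ⟨b, c, hb, hq, hbc⟩
    · exact ih hb

theorem IsBipartition.symm {V : Type*} {A : V → V → Prop} {X Y : Finset V}
    (h : IsBipartition A X Y) : IsBipartition A Y X :=
  ⟨fun v => (h.1 v).symm, h.2.1.symm, h.2.2.2, h.2.2.1⟩

namespace Equiv.Perm

variable {α : Type*} {σ τ : Perm α} {x y u v : α}

theorem SameCycle.of_forall_imp_apply [Finite α] {P : α → Prop} (hP : ∀ x, P x → P (σ x))
    (h : σ.SameCycle x y) (hx : P x) : P y := by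
  obtain ⟨i, -, rfl⟩ := h.exists_pow_eq'
  clear h
  induction i with
  | zero => exact hx
  | succ i ih => rw [pow_succ', mul_apply]; exact hP _ ih

theorem SameCycle.of_forall_sameCycle_apply [Finite α] (hτ : ∀ x, τ.SameCycle x (σ x))
    (h : σ.SameCycle x y) : τ.SameCycle x y :=
  h.of_forall_imp_apply (fun _ hz => hz.trans (hτ _)) (SameCycle.refl τ x)

theorem sameCycle_mul_swap [Finite α] (huv : ¬σ.SameCycle u v) :
    (σ * swap u v).SameCycle u v := by
  set τ := σ * swap u v
  by_contra hne
  -- `τ u = σ v`, and `τ = σ` on the cycle of `v` away from `v`: so following `σ` from `σ v`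
  -- back to `v` never leaves the `τ`-cycle of `u`
  have hP : ∀ p, σ.SameCycle v p ∧ τ.SameCycle u p →
      σ.SameCycle v (σ p) ∧ τ.SameCycle u (σ p) := by
    rintro p ⟨hvp, hup⟩
    have hpv : p ≠ v := by rintro rfl; exact hne hup
    have hpu : p ≠ u := by rintro rfl; exact huv hvp.symm
    have hτp : τ p = σ p := by simp [τ, swap_apply_of_ne_of_ne hpu hpv]
    exact ⟨sameCycle_apply_right.2 hvp, hτp ▸ sameCycle_apply_right.2 hup⟩
  have hτu : τ u = σ v := by simp [τ]
  refine hne (SameCycle.of_forall_imp_apply hP (x := σ v) ?_ ⟨?_, ?_⟩).2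
  · exact sameCycle_apply_left.2 (SameCycle.refl σ v)
  · exact sameCycle_apply_right.2 (SameCycle.refl σ v)
  · exact hτu ▸ sameCycle_apply_right.2 (SameCycle.refl τ u)

theorem sameCycle_mul_swap_apply [Finite α] (huv : ¬σ.SameCycle u v) (p : α) :
    (σ * swap u v).SameCycle p (σ p) := by
  have huv' := sameCycle_mul_swap huv
  by_cases hpu : p = u
  · subst hpu
    simpa using huv'.trans (sameCycle_apply_right.2 (SameCycle.refl (σ * swap p v) v))
  by_cases hpv : p = v
  · subst hpv
    simpa using huv'.symm.trans (sameCycle_apply_right.2 (SameCycle.refl (σ * swap u p) u))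
  simpa [swap_apply_of_ne_of_ne hpu hpv] using
    sameCycle_apply_right.2 (SameCycle.refl (σ * swap u v) p)

theorem SameCycle.mul_swap [Finite α] (huv : ¬σ.SameCycle u v) (h : σ.SameCycle x y) :
    (σ * swap u v).SameCycle x y :=
  h.of_forall_sameCycle_apply (sameCycle_mul_swap_apply huv)

noncomputable def crossPairs [Fintype α] (σ : Perm α) : ℕ :=
  #{p : α × α | ¬σ.SameCycle p.1 p.2}

theorem crossPairs_mul_swap_lt [Fintype α] (huv : ¬σ.SameCycle u v) :
    crossPairs (σ * swap u v) < crossPairs σ := by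
  refine card_lt_card ((ssubset_iff_of_subset fun p hp => ?_).2 ⟨(u, v), ?_, ?_⟩)
  · simp only [mem_filter, mem_univ, true_and] at hp ⊢
    exact fun h => hp (h.mul_swap huv)
  · simpa using huv
  · simpa using sameCycle_mul_swap huv

end Equiv.Perm

open Equiv.Perm

/-- `σ` has no *bridge*: vertices `u, v` on different cycles with `u → σ v` and `v → σ u`.
For a cycle factor `σ`, a bridge would make `σ * swap u v` a cycle factor with the cycles of
`u` and `v` merged. -/
def IsBridgeless {V : Type*} (A : V → V → Prop) (σ : Perm V) : Prop :=
  ∀ u v, ¬σ.SameCycle u v → A u (σ v) → ¬A v (σ u)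

theorem HasCycleFactor.exists_isBridgeless {V : Type*} [Fintype V] {A : V → V → Prop}
    (hA : HasCycleFactor A) : ∃ σ : Perm V, (∀ v, A v (σ v)) ∧ IsBridgeless A σ := by
  obtain ⟨σ, hσ, hmin⟩ := exists_min_image {σ : Perm V | ∀ v, A v (σ v)} crossPairs
    (hA.imp fun σ hσ => by simpa using hσ)
  simp only [mem_filter, mem_univ, true_and] at hσ hmin
  refine ⟨σ, hσ, fun u v huv hu hv => (crossPairs_mul_swap_lt huv).not_ge (hmin _ fun p => ?_)⟩
  by_cases hpu : p = u
  · simpa [hpu] using hu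
  by_cases hpv : p = v
  · simpa [hpv] using hv
  simpa [swap_apply_of_ne_of_ne hpu hpv] using hσ p

namespace BipartiteHamiltonicity

variable {V : Type*} {A : V → V → Prop} {X Y : Finset V} {a : ℕ} {σ : Perm V} {x y z w v : V}

def IsBig (A : V → V → Prop) (a : ℕ) (v : V) : Prop := 2 * a - 1 ≤ deg A v

structure Setup (A : V → V → Prop) (X Y : Finset V) (a : ℕ) : Prop where
  two_le : 2 ≤ a
  bip : IsBipartition A X Y
  card_X : #X = a
  card_Y : #Y = a
  strong : IsStrong A
  dom : ∀ x y : V, DominatingPair A x y →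
    (2 * a - 1 ≤ deg A x ∧ a + 1 ≤ deg A y) ∨ (2 * a - 1 ≤ deg A y ∧ a + 1 ≤ deg A x)

structure Bridgeless (A : V → V → Prop) (X Y : Finset V) (a : ℕ) (σ : Perm V) : Prop
    extends Setup A X Y a where
  adj_apply : ∀ v, A v (σ v)
  isBridgeless : IsBridgeless A σ

section Degrees

variable [Fintype V]

noncomputable def outDeg (A : V → V → Prop) (v : V) : ℕ := #{w | A v w}

noncomputable def inDeg (A : V → V → Prop) (v : V) : ℕ := #{w | A w v}

theorem deg_eq_outDeg_add_inDeg (A : V → V → Prop) (v : V) :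
    deg A v = outDeg A v + inDeg A v := by
  simp only [deg, outDeg, inDeg, Nat.card_eq_fintype_card, Fintype.card_subtype]

theorem two_le_outDeg {u u' : V} (hne : u ≠ u') (hu : A v u) (hu' : A v u') :
    2 ≤ outDeg A v :=
  one_lt_card.2 ⟨u, by simpa using hu, u', by simpa using hu', hne⟩

end Degrees

namespace Setup

theorem symm (h : Setup A X Y a) : Setup A Y X a :=
  { h with bip := h.bip.symm, card_X := h.card_Y, card_Y := h.card_X }

theorem not_mem_Y (h : Setup A X Y a) (hx : x ∈ X) : x ∉ Y :=
  disjoint_left.1 h.bip.2.1 hx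

theorem mem_Y_of_adj_from (h : Setup A X Y a) (hx : x ∈ X) (hxy : A x y) : y ∈ Y :=
  (h.bip.1 y).resolve_left fun hy => h.bip.2.2.1 x hx y hy hxy

theorem mem_Y_of_adj_to (h : Setup A X Y a) (hx : x ∈ X) (hyx : A y x) : y ∈ Y :=
  (h.bip.1 y).resolve_left fun hy => h.bip.2.2.1 y hy x hx hyx

theorem isBig_or_isBig (h : Setup A X Y a) (hxy : x ≠ y) (hx : A x z) (hy : A y z) :
    IsBig A a x ∨ IsBig A a y :=
  (h.dom x y ⟨hxy, z, hx, hy⟩).imp And.left And.left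

theorem isBig_of_not_isBig (h : Setup A X Y a) (hxy : x ≠ y) (hx : A x z) (hy : A y z)
    (hnx : ¬IsBig A a x) : IsBig A a y :=
  (h.isBig_or_isBig hxy hx hy).resolve_left hnx

theorem lt_deg (h : Setup A X Y a) (hxy : x ≠ y) (hx : A x z) (hy : A y z) : a < deg A x := by
  have := h.two_le
  rcases h.dom x y ⟨hxy, z, hx, hy⟩ with ⟨h₁, -⟩ | ⟨-, h₂⟩ <;> omega

theorem exists_adj_from (h : Setup A X Y a) (v : V) : ∃ w, A v w := by
  obtain ⟨u, -, hu⟩ := exists_mem_ne (h.card_X ▸ h.two_le : 1 < #X) v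
  obtain ⟨_, w, rfl, -, hvw⟩ := h.strong.exists_adj (P := (· = v)) rfl hu
  exact ⟨w, hvw⟩

theorem exists_adj_to (h : Setup A X Y a) (v : V) : ∃ w, A w v := by
  obtain ⟨u, -, hu⟩ := exists_mem_ne (h.card_X ▸ h.two_le : 1 < #X) v
  obtain ⟨w, _, hw, hv, hwv⟩ := h.strong.exists_adj (P := (· ≠ v)) hu (not_not.2 rfl)
  exact ⟨w, not_not.1 hv ▸ hwv⟩

variable [Fintype V]

theorem outDeg_eq (h : Setup A X Y a) (hx : x ∈ X) : outDeg A x = #{y ∈ Y | A x y} := by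
  rw [outDeg]
  congr 1
  ext y
  simpa using fun hxy => h.mem_Y_of_adj_from hx hxy

theorem inDeg_eq (h : Setup A X Y a) (hx : x ∈ X) : inDeg A x = #{y ∈ Y | A y x} := by
  rw [inDeg]
  congr 1
  ext y
  simpa using fun hyx => h.mem_Y_of_adj_to hx hyx

theorem outDeg_le (h : Setup A X Y a) (hx : x ∈ X) : outDeg A x ≤ a :=
  h.outDeg_eq hx ▸ h.card_Y ▸ card_filter_le _ _

theorem inDeg_le (h : Setup A X Y a) (hx : x ∈ X) : inDeg A x ≤ a :=
  h.inDeg_eq hx ▸ h.card_Y ▸ card_filter_le _ _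

theorem le_outDeg_of_isBig (h : Setup A X Y a) (hx : x ∈ X) (hb : IsBig A a x) :
    a - 1 ≤ outDeg A x := by
  have := h.inDeg_le hx
  rw [IsBig, deg_eq_outDeg_add_inDeg] at hb
  omega

theorem le_inDeg_of_isBig (h : Setup A X Y a) (hx : x ∈ X) (hb : IsBig A a x) :
    a - 1 ≤ inDeg A x := by
  have := h.outDeg_le hx
  rw [IsBig, deg_eq_outDeg_add_inDeg] at hb
  omega

theorem outDeg_lt (h : Setup A X Y a) (hx : x ∈ X) (hy : y ∈ Y) (hxy : ¬A x y) :
    outDeg A x < a := by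
  rw [h.outDeg_eq hx, ← h.card_Y]
  exact card_lt_card (filter_ssubset.2 ⟨y, hy, hxy⟩)

theorem forall_adj_of_le_outDeg (h : Setup A X Y a) (hx : x ∈ X) (hd : a ≤ outDeg A x) :
    ∀ y ∈ Y, A x y := by
  rw [h.outDeg_eq hx, ← h.card_Y] at hd
  exact card_filter_eq_iff.1 (hd.antisymm' (card_filter_le _ _))

theorem forall_adj_of_le_inDeg (h : Setup A X Y a) (hx : x ∈ X) (hd : a ≤ inDeg A x) :
    ∀ y ∈ Y, A y x := by
  rw [h.inDeg_eq hx, ← h.card_Y] at hd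
  exact card_filter_eq_iff.1 (hd.antisymm' (card_filter_le _ _))

theorem forall_adj_of_isBig (h : Setup A X Y a) (hx : x ∈ X) (hb : IsBig A a x)
    (hin : inDeg A x + 1 ≤ a) : ∀ y ∈ Y, A x y := by
  refine h.forall_adj_of_le_outDeg hx ?_
  rw [IsBig, deg_eq_outDeg_add_inDeg] at hb
  omega

theorem card_not_adj_add_card_not_adj_le (h : Setup A X Y a) (hx : x ∈ X) (hb : IsBig A a x) :
    #{y ∈ Y | ¬A x y} + #{y ∈ Y | ¬A y x} ≤ 1 := by
  have hout := card_filter_add_card_filter_not (s := Y) (fun y => A x y)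
  have hin := card_filter_add_card_filter_not (s := Y) (A · x)
  rw [IsBig, deg_eq_outDeg_add_inDeg, h.outDeg_eq hx, h.inDeg_eq hx] at hb
  have := h.card_Y
  have := h.two_le
  omega

theorem adj_to_of_not_adj_from (h : Setup A X Y a) (hx : x ∈ X) (hb : IsBig A a x)
    (hy₀ : y ∈ Y) (hmiss : ¬A x y) : ∀ u ∈ Y, A u x := by
  intro u hu
  by_contra hux
  have h₁ : 0 < #{y ∈ Y | ¬A x y} := card_pos.2 ⟨y, by simp [hy₀, hmiss]⟩
  have h₂ : 0 < #{y ∈ Y | ¬A y x} := card_pos.2 ⟨u, by simp [hu, hux]⟩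
  have := h.card_not_adj_add_card_not_adj_le hx hb
  omega

theorem adj_from_of_not_adj_to (h : Setup A X Y a) (hx : x ∈ X) (hb : IsBig A a x)
    (hy₀ : y ∈ Y) (hmiss : ¬A y x) : ∀ u ∈ Y, A x u := by
  intro u hu
  by_contra hxu
  have h₁ : 0 < #{y ∈ Y | ¬A x y} := card_pos.2 ⟨u, by simp [hu, hxu]⟩
  have h₂ : 0 < #{y ∈ Y | ¬A y x} := card_pos.2 ⟨y, by simp [hy₀, hmiss]⟩
  have := h.card_not_adj_add_card_not_adj_le hx hb
  omega

theorem inDeg_le_card_isBig_add_one (h : Setup A X Y a) (v : V) :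
    inDeg A v ≤ #{u | A u v ∧ IsBig A a u} + 1 := by
  refine (card_filter_le_card_filter_add _ (fun u => A u v ∧ IsBig A a u) (A · v)).trans ?_
  gcongr
  refine card_le_one.2 fun u hu u' hu' => by_contra fun hne => ?_
  simp only [mem_filter, mem_univ, true_and, not_and] at hu hu'
  exact (h.isBig_or_isBig hne hu.2 hu'.2).elim (hu.1 hu.2) (hu'.1 hu'.2)

theorem inDeg_le_of_forall_isBig_mem (h : Setup A X Y a) {S : Finset V}
    (hS : ∀ u, A u v → IsBig A a u → u ∈ S) : inDeg A v ≤ #S + 1 :=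
  (h.inDeg_le_card_isBig_add_one v).trans <| by
    gcongr
    intro u hu
    simp only [mem_filter, mem_univ, true_and] at hu
    exact hS u hu.1 hu.2

theorem card_le_card_biUnion_of_subset (h : Setup A X Y a) {S : Finset V} (hS : S ⊆ X) :
    #S ≤ #(S.biUnion fun v => {w | A v w}) := by
  by_cases hdisj : (S : Set V).PairwiseDisjoint fun v => ({w | A v w} : Finset V)
  · rw [card_biUnion hdisj, card_eq_sum_ones]
    exact sum_le_sum fun v _ => card_pos.2 ((h.exists_adj_from v).imp fun w hw => by simpa)
  obtain ⟨x₁, hx₁, x₂, hx₂, hne, hx₁₂⟩ : ∃ x₁ ∈ S, ∃ x₂ ∈ S, x₁ ≠ x₂ ∧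
      ¬_root_.Disjoint ({w | A x₁ w} : Finset V) ({w | A x₂ w} : Finset V) := by
    simpa [Set.PairwiseDisjoint, Set.Pairwise] using hdisj
  obtain ⟨y, hy₁, hy₂⟩ := not_disjoint_iff.1 hx₁₂
  simp only [mem_filter, mem_univ, true_and] at hy₁ hy₂
  obtain ⟨x, hxS, hbx⟩ : ∃ x ∈ S, IsBig A a x := (h.isBig_or_isBig hne hy₁ hy₂).elim
    (fun hb => ⟨x₁, hx₁, hb⟩) fun hb => ⟨x₂, hx₂, hb⟩
  have hN : a - 1 ≤ #(S.biUnion fun v => {w | A v w}) :=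
    (h.le_outDeg_of_isBig (hS hxS) hbx).trans (card_le_card
      (subset_biUnion_of_mem (fun v => ({w | A v w} : Finset V)) hxS))
  have hSX : #S ≤ a := h.card_X ▸ card_le_card hS
  by_cases hSa : #S = a
  · -- then `S = X`, and every vertex of `Y` has an in-neighbour in `X`
    refine hSa.trans_le (h.card_Y ▸ card_le_card fun y hy => ?_)
    obtain ⟨u, hu⟩ := h.exists_adj_to y
    have huS : u ∈ S := eq_of_subset_of_card_le hS (h.card_X.trans hSa.symm).le ▸
      h.symm.mem_Y_of_adj_to hy hu
    exact mem_biUnion.2 ⟨u, huS, by simpa⟩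
  · omega

theorem hasCycleFactor (h : Setup A X Y a) : HasCycleFactor A := by
  obtain ⟨f, hf, hAf⟩ := (Fintype.all_card_le_filter_rel_iff_exists_injective A).1 fun S => by
    set N := fun T : Finset V => T.biUnion fun v => ({w | A v w} : Finset V)
    have hXY : _root_.Disjoint (N {x ∈ S | x ∈ X}) (N {x ∈ S | x ∉ X}) := by
      refine disjoint_left.2 fun w hw hw' => ?_
      obtain ⟨x, hx, hxw⟩ := mem_biUnion.1 hw
      obtain ⟨y, hy, hyw⟩ := mem_biUnion.1 hw'
      simp only [mem_filter, mem_univ, true_and] at hx hy hxw hyw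
      exact h.not_mem_Y (h.symm.mem_Y_of_adj_from ((h.bip.1 y).resolve_left hy.2) hyw)
        (h.mem_Y_of_adj_from hx.2 hxw)
    calc #S = #{x ∈ S | x ∈ X} + #{x ∈ S | x ∉ X} := (card_filter_add_card_filter_not _).symm
      _ ≤ #(N {x ∈ S | x ∈ X}) + #(N {x ∈ S | x ∉ X}) := Nat.add_le_add
          (h.card_le_card_biUnion_of_subset fun x hx => (mem_filter.1 hx).2)
          (h.symm.card_le_card_biUnion_of_subset
            fun v hv => (h.bip.1 v).resolve_left (mem_filter.1 hv).2)
      _ = #(N {x ∈ S | x ∈ X} ∪ N {x ∈ S | x ∉ X}) := (card_union_of_disjoint hXY).symm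
      _ ≤ #{w | ∃ v ∈ S, A v w} := card_le_card fun w hw => by
          simp only [N, mem_union, mem_biUnion, mem_filter, mem_univ, true_and] at hw ⊢
          rcases hw with ⟨v, hv, hvw⟩ | ⟨v, hv, hvw⟩ <;> exact ⟨v, hv.1, hvw⟩
  exact ⟨Equiv.ofBijective f (Finite.injective_iff_bijective.1 hf), hAf⟩

end Setup

namespace Bridgeless

theorem symm (h : Bridgeless A X Y a σ) : Bridgeless A Y X a σ :=
  { h with toSetup := h.toSetup.symm }

theorem adj_inv_apply (h : Bridgeless A X Y a σ) (v : V) : A (σ⁻¹ v) v := by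
  simpa using h.adj_apply (σ⁻¹ v)

theorem apply_mem_Y (h : Bridgeless A X Y a σ) (hx : x ∈ X) : σ x ∈ Y :=
  h.mem_Y_of_adj_from hx (h.adj_apply x)

theorem inv_apply_mem_Y (h : Bridgeless A X Y a σ) (hx : x ∈ X) : σ⁻¹ x ∈ Y :=
  h.mem_Y_of_adj_to hx (h.adj_inv_apply x)

theorem card_filter_eq (h : Bridgeless A X Y a σ) {P : V → Prop} [DecidablePred P]
    (hP : ∀ v, P (σ v) ↔ P v) : #{x ∈ X | P x} = #{y ∈ Y | P y} := by
  refine card_nbij σ (fun x hx => ?_) σ.injective.injOn (fun y hy => ?_)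
  · simp only [mem_coe, mem_filter] at hx ⊢
    exact ⟨h.apply_mem_Y hx.1, (hP x).2 hx.2⟩
  · simp only [mem_coe, mem_filter] at hy
    refine ⟨σ⁻¹ y, ?_, by simp⟩
    simp only [mem_coe, mem_filter]
    exact ⟨h.symm.inv_apply_mem_Y hy.1, (hP _).1 (by simpa using hy.2)⟩

theorem exists_isBig (h : Bridgeless A X Y a σ) (hvw : ¬σ.SameCycle v w) : ∃ z, IsBig A a z := by
  obtain ⟨p, q, hp, hq, hpq⟩ := h.strong.exists_adj (P := σ.SameCycle v) (SameCycle.refl σ v) hvw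
  have hne : p ≠ σ⁻¹ q := fun he => hq (hp.trans (by simp [he, SameCycle.refl]))
  exact (h.isBig_or_isBig hne hpq (h.adj_inv_apply q)).elim (⟨p, ·⟩) (⟨σ⁻¹ q, ·⟩)

variable [Fintype V]

theorem filter_sameCycle_eq_singleton (h : Bridgeless A X Y a σ) (hz : z ∈ X)
    (h2 : σ (σ z) = z) : {x ∈ X | σ.SameCycle z x} = {z} := by
  refine eq_singleton_iff_unique_mem.2 ⟨by simpa [SameCycle.refl] using hz, fun x hx => ?_⟩
  simp only [mem_filter] at hx
  have : x = z ∨ x = σ z := hx.2.of_forall_imp_apply (P := fun x => x = z ∨ x = σ z)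
    (fun _ ht => ht.elim (fun ht => by simp [ht]) fun ht => by simp [ht, h2]) (Or.inl rfl)
  exact this.resolve_right fun he => h.not_mem_Y hx.1 (he ▸ h.apply_mem_Y hz)

theorem two_le_card_filter_sameCycle (h : Bridgeless A X Y a σ) (hz : z ∈ X)
    (h2 : σ (σ z) ≠ z) : 2 ≤ #{x ∈ X | σ.SameCycle z x} :=
  one_lt_card.2 ⟨z, by simpa [SameCycle.refl] using hz, σ (σ z),
    by simpa [SameCycle.refl] using h.symm.apply_mem_Y (h.apply_mem_Y hz), h2.symm⟩

theorem card_filter_sameCycle_add_le (h : Bridgeless A X Y a σ) (hzw : ¬σ.SameCycle z w) :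
    #{x ∈ X | σ.SameCycle z x} + #{x ∈ X | σ.SameCycle w x} ≤ a :=
  (card_filter_add_card_filter_le (p := σ.SameCycle z) (q := σ.SameCycle w)
    fun _ _ hz hw => hzw (hz.trans hw.symm)).trans h.card_X.le

theorem card_filter_adj_apply_le (h : Bridgeless A X Y a σ) :
    #{x ∈ X | ¬σ.SameCycle z x ∧ A x (σ z)} ≤ #{y ∈ Y | ¬A z y} := by
  refine card_le_card_of_injOn σ (fun x hx => ?_) σ.injective.injOn
  simp only [mem_coe, mem_filter] at hx ⊢
  exact ⟨h.apply_mem_Y hx.1, h.isBridgeless x z (fun hc => hx.2.1 hc.symm) hx.2.2⟩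

theorem card_filter_inv_apply_adj_le (h : Bridgeless A X Y a σ) :
    #{x ∈ X | ¬σ.SameCycle z x ∧ A (σ⁻¹ z) x} ≤ #{y ∈ Y | ¬A y z} := by
  refine card_le_card_of_injOn (⇑σ⁻¹) (fun x hx => ?_) σ⁻¹.injective.injOn
  simp only [mem_coe, mem_filter] at hx ⊢
  refine ⟨h.inv_apply_mem_Y hx.1, fun hxz => h.isBridgeless (σ⁻¹ z) (σ⁻¹ x)
    (fun hc => hx.2.1 (by simpa using hc)) (by simpa using hx.2.2) (by simpa using hxz)⟩

theorem inDeg_apply_le (h : Bridgeless A X Y a σ) (hz : z ∈ X) :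
    inDeg A (σ z) ≤ #{x ∈ X | σ.SameCycle z x} + #{y ∈ Y | ¬A z y} := by
  rw [h.symm.inDeg_eq (h.apply_mem_Y hz)]
  exact (card_filter_le_card_filter_add X (σ.SameCycle z) (A · (σ z))).trans
    (Nat.add_le_add_left h.card_filter_adj_apply_le _)

theorem outDeg_inv_apply_le (h : Bridgeless A X Y a σ) (hz : z ∈ X) :
    outDeg A (σ⁻¹ z) ≤ #{x ∈ X | σ.SameCycle z x} + #{y ∈ Y | ¬A y z} := by
  rw [h.symm.outDeg_eq (h.inv_apply_mem_Y hz)]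
  exact (card_filter_le_card_filter_add X (σ.SameCycle z) (A (σ⁻¹ z))).trans
    (Nat.add_le_add_left h.card_filter_inv_apply_adj_le _)

theorem apply_apply_ne_of_isBig (h : Bridgeless A X Y a σ) (ha : 3 ≤ a) (hz : z ∈ X)
    (hb : IsBig A a z) : σ (σ z) ≠ z := by
  intro h2
  have hin := h.inDeg_apply_le hz
  have hout := h.outDeg_inv_apply_le hz
  rw [h.filter_sameCycle_eq_singleton hz h2, card_singleton] at hin hout
  rw [show σ⁻¹ z = σ z by rw [inv_eq_iff_eq, h2]] at hout
  have := h.card_not_adj_add_card_not_adj_le hz hb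
  -- so `σ z` has at most three arcs, yet it shares the out-neighbour `z` with another vertex
  have hz₁ : 1 < #{u | A u z} := by
    have := h.le_inDeg_of_isBig hz hb
    rw [inDeg] at this
    omega
  obtain ⟨y, hy, hne⟩ := exists_mem_ne hz₁ (σ z)
  have hlt := h.lt_deg hne.symm (by simpa [h2] using h.adj_apply (σ z)) (by simpa using hy)
  rw [deg_eq_outDeg_add_inDeg] at hlt
  omega

theorem sameCycle_of_not_adj (h : Bridgeless A X Y a σ) (ha : 3 ≤ a) (hz : z ∈ X) (hw : w ∈ X)
    (hbz : IsBig A a z) (hbw : IsBig A a w) (hmiss : ¬A w (σ z)) : σ.SameCycle z w := by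
  by_contra hzw
  have hszY := h.apply_mem_Y hz
  have hswY := h.apply_mem_Y hw
  have hin : ∀ y ∈ Y, A y w := h.adj_to_of_not_adj_from hw hbw hszY hmiss
  have hs := h.two_le_card_filter_sameCycle hz (h.apply_apply_ne_of_isBig ha hz hbz)
  have ht := h.two_le_card_filter_sameCycle hw (h.apply_apply_ne_of_isBig ha hw hbw)
  have hst := h.card_filter_sameCycle_add_le hzw
  have hmz := h.card_not_adj_add_card_not_adj_le hz hbz
  have hmw := h.card_not_adj_add_card_not_adj_le hw hbw
  -- `σ⁻¹ w` has out-neighbours on the cycle of `w` only, so it is not big,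
  -- hence all the other in-neighbours of `w` are big
  have hnb : ¬IsBig A a (σ⁻¹ w) := fun hb => by
    have := h.symm.le_outDeg_of_isBig (h.inv_apply_mem_Y hw) hb
    have := h.outDeg_inv_apply_le hw
    have : #{y ∈ Y | ¬A y w} = 0 := card_filter_eq_zero_iff.2 fun y hy => not_not.2 (hin y hy)
    omega
  have hbig : ∀ y ∈ Y, y ≠ σ⁻¹ w → IsBig A a y := fun y hy hne =>
    h.isBig_of_not_isBig hne.symm (h.adj_inv_apply w) (hin y hy) hnb
  have hbsz : IsBig A a (σ z) := hbig _ hszY fun he =>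
    hzw (by simpa using (show σ.SameCycle (σ z) (σ⁻¹ w) from he ▸ SameCycle.refl _ _))
  have hbsw : IsBig A a (σ w) := hbig _ hswY fun he =>
    h.apply_apply_ne_of_isBig ha hw hbw (by rw [he]; simp)
  -- `σ z` and `σ w` are big with few in-neighbours, so they send arcs to all of `X`
  have hszX : ∀ x ∈ X, A (σ z) x := h.symm.forall_adj_of_isBig hszY hbsz (by
    have := h.inDeg_apply_le hz
    omega)
  have hswX : ∀ x ∈ X, A (σ w) x := h.symm.forall_adj_of_isBig hswY hbsw (by
    have := h.inDeg_apply_le hw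
    omega)
  exact h.isBridgeless (σ w) (σ z) (fun hc => hzw (by simpa using hc.symm))
    (hswX _ (h.symm.apply_mem_Y hszY)) (hszX _ (h.symm.apply_mem_Y hswY))

theorem sameCycle_of_isBig_of_mem_X (h : Bridgeless A X Y a σ) (ha : 3 ≤ a) (hz : z ∈ X)
    (hw : w ∈ X) (hbz : IsBig A a z) (hbw : IsBig A a w) : σ.SameCycle z w := by
  by_cases hmiss : A w (σ z)
  · by_contra hzw
    exact hzw (h.sameCycle_of_not_adj ha hw hz hbw hbz
      (h.isBridgeless w z (fun hc => hzw hc.symm) hmiss)).symm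
  · exact h.sameCycle_of_not_adj ha hz hw hbz hbw hmiss

theorem inDeg_le_card_add_one (h : Bridgeless A X Y a σ)
    (hbig : ∀ u ∈ Y, IsBig A a u → σ.SameCycle z u) (hx : x ∈ X) :
    inDeg A x ≤ #{y ∈ Y | σ.SameCycle z y} + 1 :=
  h.inDeg_le_of_forall_isBig_mem fun u hux hbu => by
    have huY := h.mem_Y_of_adj_to hx hux
    simpa [huY] using hbig u huY hbu

theorem outDeg_apply_le (h : Bridgeless A X Y a σ) (hz : z ∈ X) (hnb : ¬IsBig A a (σ z))
    (hbig : ∀ u ∈ Y, IsBig A a u → A u (σ (σ z))) :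
    outDeg A (σ z) ≤ #{x ∈ X | σ.SameCycle z x} := by
  rw [h.symm.outDeg_eq (h.apply_mem_Y hz)]
  refine card_le_card fun x hx => ?_
  simp only [mem_filter] at hx ⊢
  refine ⟨hx.1, by_contra fun hzx => ?_⟩
  -- `σ⁻¹ x` shares the out-neighbour `x` with `σ z`, so it is big and they form a bridge
  have hnc : ¬σ.SameCycle (σ z) (σ⁻¹ x) := fun hc => hzx (by simpa using hc)
  have hbx : IsBig A a (σ⁻¹ x) :=
    h.isBig_of_not_isBig (fun he => hnc (he ▸ .refl _ _)) hx.2 (h.adj_inv_apply x) hnb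
  exact h.isBridgeless (σ z) (σ⁻¹ x) hnc (by simpa using hx.2)
    (hbig _ (h.inv_apply_mem_Y hx.1) hbx)

theorem sameCycle_of_isBig_of_mem_X_of_mem_Y (h : Bridgeless A X Y a σ) (ha : 3 ≤ a)
    (hz : z ∈ X) (hy : y ∈ Y) (hbz : IsBig A a z) (hby : IsBig A a y) : σ.SameCycle z y := by
  by_contra hzy
  have hs := h.two_le_card_filter_sameCycle hz (h.apply_apply_ne_of_isBig ha hz hbz)
  have ht := h.symm.two_le_card_filter_sameCycle hy (h.symm.apply_apply_ne_of_isBig ha hy hby)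
  have hbal := h.card_filter_eq (P := σ.SameCycle y) fun _ => sameCycle_apply_right
  have hst := h.card_filter_sameCycle_add_le hzy
  -- the big vertices of `X` lie on the cycle of `z`, those of `Y` on the cycle of `y`
  have hinX : ∀ x ∈ X, inDeg A x ≤ #{u ∈ Y | σ.SameCycle y u} + 1 := fun x hx =>
    h.inDeg_le_card_add_one (fun u hu hbu => h.symm.sameCycle_of_isBig_of_mem_X ha hy hu hby hbu) hx
  have hinY : ∀ u ∈ Y, inDeg A u ≤ #{x ∈ X | σ.SameCycle z x} + 1 := fun u hu =>
    h.symm.inDeg_le_card_add_one (fun x hx hbx => h.sameCycle_of_isBig_of_mem_X ha hz hx hbz hbx) hu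
  have hz₀ := h.le_inDeg_of_isBig hz hbz
  have hz₁ := hinX z hz
  have hbigX : ∀ x ∈ X, IsBig A a x → ∀ u ∈ Y, A x u := fun x hx hbx =>
    h.forall_adj_of_isBig hx hbx (by have := hinX x hx; omega)
  have hbigY : ∀ u ∈ Y, IsBig A a u → ∀ x ∈ X, A u x := fun u hu hbu =>
    h.symm.forall_adj_of_isBig hu hbu (by have := hinY u hu; omega)
  -- `σ z` shares the out-neighbour `σ (σ z)` with `y`, but all its neighbours are on the
  -- cycle of `z`
  have hszY := h.apply_mem_Y hz
  have hszX := h.symm.apply_mem_Y hszY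
  have hne : σ z ≠ y := fun he => hzy (he ▸ sameCycle_apply_right.2 (SameCycle.refl σ z))
  have hlt : a < deg A (σ z) := h.symm.lt_deg hne (h.adj_apply (σ z)) (hbigY y hy hby _ hszX)
  have hnb : ¬IsBig A a (σ z) := fun hb => hzy (by
    simpa using (h.symm.sameCycle_of_isBig_of_mem_X ha hy hszY hby hb).symm)
  have hout := h.outDeg_apply_le hz hnb fun u hu hbu => hbigY u hu hbu _ hszX
  have hin := h.inDeg_apply_le hz
  have : #{u ∈ Y | ¬A z u} = 0 :=
    card_filter_eq_zero_iff.2 fun u hu => not_not.2 (hbigX z hz hbz u hu)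
  rw [deg_eq_outDeg_add_inDeg] at hlt
  omega

theorem sameCycle_of_isBig (h : Bridgeless A X Y a σ) (ha : 3 ≤ a) (hbz : IsBig A a z)
    (hbw : IsBig A a w) : σ.SameCycle z w := by
  rcases h.bip.1 z with hz | hz <;> rcases h.bip.1 w with hw | hw
  · exact h.sameCycle_of_isBig_of_mem_X ha hz hw hbz hbw
  · exact h.sameCycle_of_isBig_of_mem_X_of_mem_Y ha hz hw hbz hbw
  · exact (h.sameCycle_of_isBig_of_mem_X_of_mem_Y ha hw hz hbw hbz).symm
  · exact h.symm.sameCycle_of_isBig_of_mem_X ha hz hw hbz hbw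

theorem card_filter_not_sameCycle_ne_two (h : Bridgeless A X Y a σ)
    (hbig : ∀ u, IsBig A a u → σ.SameCycle z u) : #{x ∈ X | ¬σ.SameCycle z x} ≠ 2 := by
  intro hr
  have hsplit := card_filter_add_card_filter_not (s := X) (fun x => σ.SameCycle z x)
  have hbal := h.card_filter_eq (P := σ.SameCycle z) fun _ => sameCycle_apply_right
  have := h.card_X
  -- every in-degree is at most `a - 1`, so big vertices send arcs to all of the other side
  have hadj : ∀ c p, IsBig A a c → (c ∈ X ↔ p ∈ X) → A c (σ p) := by
    intro c p hbc hcp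
    rcases h.bip.1 c with hc | hc
    · refine h.forall_adj_of_isBig hc hbc ?_ _ (h.apply_mem_Y (hcp.1 hc))
      have := h.inDeg_le_card_add_one (fun u _ hu => hbig u hu) hc
      omega
    · have hp : p ∈ Y := (h.bip.1 p).resolve_left fun hp => h.not_mem_Y (hcp.2 hp) hc
      refine h.symm.forall_adj_of_isBig hc hbc ?_ _ (h.symm.apply_mem_Y hp)
      have := h.symm.inDeg_le_card_add_one (fun u _ hu => hbig u hu) hc
      omega
  -- an arc `p → q` entering the cycle of `z`: `p` and `σ⁻¹ q` form a bridge
  obtain ⟨x₀, hx₀⟩ := card_pos.1 (by omega : 0 < #{x ∈ X | ¬σ.SameCycle z x})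
  obtain ⟨p, q, hp, hq, hpq⟩ := h.strong.exists_adj (P := (¬σ.SameCycle z ·))
    (mem_filter.1 hx₀).2 (not_not.2 (SameCycle.refl σ z))
  have hzq : σ.SameCycle z (σ⁻¹ q) := by simpa using not_not.1 hq
  have hnc : ¬σ.SameCycle p (σ⁻¹ q) := fun hc => hp (hzq.trans hc.symm)
  have hbq : IsBig A a (σ⁻¹ q) := h.isBig_of_not_isBig (fun he => hnc (he ▸ .refl _ _)) hpq
    (h.adj_inv_apply q) fun hb => hp (hbig p hb)
  have hside : σ⁻¹ q ∈ X ↔ p ∈ X := by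
    constructor <;> intro hmem
    · exact h.symm.mem_Y_of_adj_to (h.mem_Y_of_adj_from hmem (h.adj_inv_apply q)) hpq
    · exact h.symm.mem_Y_of_adj_to (h.mem_Y_of_adj_from hmem hpq) (h.adj_inv_apply q)
  exact h.isBridgeless p (σ⁻¹ q) hnc (by simpa using hpq) (hadj _ p hbq hside)

theorem exists_not_adj_of_adj (h : Bridgeless A X Y a σ)
    (hbig : ∀ u, IsBig A a u → σ.SameCycle z u) (hw : w ∈ X)
    (hC : ∀ u, ¬σ.SameCycle z u ↔ u = w ∨ u = σ w) (hσw : σ (σ w) = w)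
    (hwv : A w v) (hv : σ.SameCycle z v) :
    ∃ c ∈ Y, σ.SameCycle z c ∧ ¬A c w ∧ ∀ u, σ.SameCycle z u → IsBig A a u := by
  have hzw : ¬σ.SameCycle z w := (hC w).2 (Or.inl rfl)
  have hzy : ¬σ.SameCycle z (σ w) := (hC _).2 (Or.inr rfl)
  have hyY := h.apply_mem_Y hw
  -- `σ⁻¹ v` is big (it shares `v` with `w`) and has no arc to `σ w` (no bridge with `w`),
  -- so it receives arcs from all of `Y`
  have hbX : σ⁻¹ v ∈ X := h.symm.inv_apply_mem_Y (h.mem_Y_of_adj_from hw hwv)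
  have hzb : σ.SameCycle z (σ⁻¹ v) := by simpa using hv
  have hbb : IsBig A a (σ⁻¹ v) := h.isBig_of_not_isBig (fun he => hzw (by rwa [he])) hwv
    (h.adj_inv_apply v) fun hb => hzw (hbig w hb)
  have hby : ¬A (σ⁻¹ v) (σ w) :=
    h.isBridgeless w (σ⁻¹ v) (fun hc => hzw (hzb.trans hc.symm)) (by simpa using hwv)
  have hinb : ∀ u ∈ Y, A u (σ⁻¹ v) := h.adj_to_of_not_adj_from hbX hbb hyY hby
  -- likewise `σ⁻¹ (σ⁻¹ v)` is big, has no arc to `w`, and receives arcs from all of `X`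
  have hcY : σ⁻¹ (σ⁻¹ v) ∈ Y := h.inv_apply_mem_Y hbX
  have hzc : σ.SameCycle z (σ⁻¹ (σ⁻¹ v)) := by simpa using hzb
  have hbc : IsBig A a (σ⁻¹ (σ⁻¹ v)) := h.isBig_of_not_isBig (fun he => hzy (by rwa [he]))
    (hinb _ hyY) (h.adj_inv_apply _) fun hb => hzy (hbig _ hb)
  have hcw : ¬A (σ⁻¹ (σ⁻¹ v)) w := fun hcw => h.isBridgeless _ (σ w)
    (fun hc => hzy (hzc.trans hc)) (by rwa [hσw]) (by simpa using hinb _ hyY)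
  have hinc : ∀ x ∈ X, A x (σ⁻¹ (σ⁻¹ v)) := h.symm.adj_to_of_not_adj_from hcY hbc hw hcw
  refine ⟨_, hcY, hzc, hcw, fun u hu => ?_⟩
  rcases h.bip.1 u with huX | huY
  · exact h.isBig_of_not_isBig (fun he => hzw (by rwa [he])) (hinc w hw) (hinc u huX)
      fun hb => hzw (hbig w hb)
  · exact h.isBig_of_not_isBig (fun he => hzy (by rwa [he])) (hinb _ hyY) (hinb u huY)
      fun hb => hzy (hbig _ hb)

theorem not_adj_of_compl_eq_pair (h : Bridgeless A X Y a σ)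
    (hbig : ∀ u, IsBig A a u → σ.SameCycle z u) (hw : w ∈ X)
    (hC : ∀ u, ¬σ.SameCycle z u ↔ u = w ∨ u = σ w) (hσw : σ (σ w) = w)
    (hv : σ.SameCycle z v) : ¬A w v := by
  intro hwv
  obtain ⟨c, hcY, hzc, hcw, hbigC⟩ := h.exists_not_adj_of_adj hbig hw hC hσw hwv hv
  have hzw : ¬σ.SameCycle z w := (hC w).2 (Or.inl rfl)
  have hzy : ¬σ.SameCycle z (σ w) := (hC _).2 (Or.inr rfl)
  have hyY := h.apply_mem_Y hw
  -- the vertices of the cycle of `z` with an arc into `{w, σ w}` form a `σ`-invariant set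
  have hP : ∀ t, σ.SameCycle z t ∧ (A t w ∨ A t (σ w)) →
      σ.SameCycle z (σ t) ∧ (A (σ t) w ∨ A (σ t) (σ w)) := by
    rintro t ⟨hzt, ht⟩
    have hzσt := sameCycle_apply_right.2 hzt
    refine ⟨hzσt, ?_⟩
    rcases h.bip.1 t with htX | htY
    · have hty := ht.resolve_left fun htw => h.bip.2.2.1 t htX w hw htw
      have := h.isBridgeless t w (fun hc => hzw (hzt.trans hc)) hty
      exact Or.inl (h.symm.adj_from_of_not_adj_to (h.apply_mem_Y htX) (hbigC _ hzσt) hw this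
        w hw)
    · have htw := ht.resolve_right fun hty => h.bip.2.2.2 t htY _ hyY hty
      have := h.isBridgeless t (σ w) (fun hc => hzy (hzt.trans hc)) (by rwa [hσw])
      exact Or.inr (h.adj_from_of_not_adj_to (h.symm.apply_mem_Y htY) (hbigC _ hzσt) hyY this
        _ hyY)
  -- it is nonempty since `A` is strong, hence contains all of the cycle, in particular `c`
  obtain ⟨p, q, hp, hq, hpq⟩ := h.strong.exists_adj (P := σ.SameCycle z) (.refl σ z) hzw
  have hPp : σ.SameCycle z p ∧ (A p w ∨ A p (σ w)) := by
    refine ⟨hp, ?_⟩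
    rcases (hC q).1 hq with he | he <;> rw [he] at hpq
    exacts [Or.inl hpq, Or.inr hpq]
  have hPc := (hp.symm.trans hzc).of_forall_imp_apply hP hPp
  exact hcw (hPc.2.resolve_right fun hcy => h.bip.2.2.2 _ hcY _ hyY hcy)

theorem card_filter_not_sameCycle_ne_one (h : Bridgeless A X Y a σ)
    (hbig : ∀ u, IsBig A a u → σ.SameCycle z u) : #{x ∈ X | ¬σ.SameCycle z x} ≠ 1 := by
  intro hr
  obtain ⟨w, hW⟩ := card_eq_one.1 hr
  have hw : w ∈ X ∧ ¬σ.SameCycle z w := by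
    have : w ∈ ({x ∈ X | ¬σ.SameCycle z x} : Finset V) := by
      rw [hW]
      exact mem_singleton_self w
    exact mem_filter.1 this
  have hU : #{y ∈ Y | ¬σ.SameCycle z y} = 1 :=
    (h.card_filter_eq (P := (¬σ.SameCycle z ·)) fun _ => not_congr sameCycle_apply_right) ▸ hr
  have hzy : ¬σ.SameCycle z (σ w) := by simpa using hw.2
  have hyY := h.apply_mem_Y hw.1
  have hC : ∀ u, ¬σ.SameCycle z u ↔ u = w ∨ u = σ w := by
    refine fun u => ⟨fun hu => ?_, by rintro (rfl | rfl); exacts [hw.2, hzy]⟩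
    rcases h.bip.1 u with huX | huY
    · exact Or.inl (mem_singleton.1 (hW ▸ mem_filter.2 ⟨huX, hu⟩))
    · exact Or.inr (card_le_one.1 hU.le _ (mem_filter.2 ⟨huY, hu⟩) _ (mem_filter.2 ⟨hyY, hzy⟩))
  have hσw : σ (σ w) = w := ((hC _).1 (by simpa using hzy)).resolve_right fun he =>
    h.not_mem_Y hw.1 (σ.injective he ▸ hyY)
  -- some arc leaves `{w, σ w}`, from `w` or from `σ w`
  obtain ⟨p, q, hp, hq, hpq⟩ := h.strong.exists_adj (P := (¬σ.SameCycle z ·)) hw.2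
    (not_not.2 (SameCycle.refl σ z))
  rcases (hC p).1 hp with rfl | rfl
  · exact h.not_adj_of_compl_eq_pair hbig hw.1 hC hσw (not_not.1 hq) hpq
  · exact h.symm.not_adj_of_compl_eq_pair hbig hyY (fun u => by rw [hC, hσw, or_comm])
      (by rw [hσw]) (not_not.1 hq) hpq

theorem sameCycle_of_three_le (h : Bridgeless A X Y a σ) (ha : 3 ≤ a) (v w : V) :
    σ.SameCycle v w := by
  by_contra hvw
  obtain ⟨z, hbz⟩ := h.exists_isBig hvw
  wlog hz : z ∈ X generalizing X Y
  · exact this h.symm ((h.bip.1 z).resolve_left hz)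
  have hbig : ∀ u, IsBig A a u → σ.SameCycle z u := fun u hu => h.sameCycle_of_isBig ha hbz hu
  obtain ⟨p, hp⟩ : ∃ p, ¬σ.SameCycle z p := by
    by_contra! hall
    exact hvw ((hall v).symm.trans (hall w))
  have hr₀ : 0 < #{x ∈ X | ¬σ.SameCycle z x} := by
    refine card_pos.2 ((h.bip.1 p).elim (fun hpX => ⟨p, by simpa [hpX]⟩) fun hpY => ⟨σ p, ?_⟩)
    simpa [h.symm.apply_mem_Y hpY] using hp
  -- `z` has `a - 1` in-neighbours, all big but one, so the cycle of `z` misses at most `2` of `X`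
  have hr₂ : #{x ∈ X | ¬σ.SameCycle z x} ≤ 2 := by
    have := h.le_inDeg_of_isBig hz hbz
    have := h.inDeg_le_card_add_one (fun u _ hu => hbig u hu) hz
    have := card_filter_add_card_filter_not (s := X) (fun x => σ.SameCycle z x)
    have := h.card_filter_eq (P := σ.SameCycle z) fun _ => sameCycle_apply_right
    have := h.card_X
    omega
  have := h.card_filter_not_sameCycle_ne_one hbig
  have := h.card_filter_not_sameCycle_ne_two hbig
  omega

theorem sameCycle_two_of_apply_apply_ne (h : Bridgeless A X Y 2 σ) (hx : x ∈ X)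
    (h2 : σ (σ x) ≠ x) (v : V) : σ.SameCycle x v := by
  have hall : ∀ x' ∈ X, σ.SameCycle x x' := card_filter_eq_iff.1 <|
    (card_filter_le _ _).antisymm (h.card_X ▸ h.two_le_card_filter_sameCycle hx h2)
  rcases h.bip.1 v with hv | hv
  · exact hall v hv
  · simpa using hall _ (h.symm.apply_mem_Y hv)

theorem not_adj_apply_two (h : Bridgeless A X Y 2 σ) (hinv : ∀ t, σ (σ t) = t) {x₁ x₂ : V}
    (hx₁ : x₁ ∈ X) (hx₂ : x₂ ∈ X) (hnc : ¬σ.SameCycle x₁ x₂) : ¬A x₁ (σ x₂) := by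
  intro harc
  have hne : x₁ ≠ x₂ := fun he => hnc (he ▸ .refl _ _)
  have hnb₁ : ¬A x₂ (σ x₁) := h.isBridgeless x₁ x₂ hnc harc
  -- `x₂` has degree at least `3` but at most one out-neighbour, so it receives arcs from all of `Y`
  have hlt := h.lt_deg hne.symm (h.adj_apply x₂) harc
  have hout₂ := h.outDeg_lt hx₂ (h.apply_mem_Y hx₁) hnb₁
  rw [deg_eq_outDeg_add_inDeg] at hlt
  have hin := h.forall_adj_of_le_inDeg hx₂ (by have := h.inDeg_le hx₂; omega)
  have hnb₂ : ¬A (σ x₂) x₁ := by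
    simpa [hinv] using h.isBridgeless (σ x₁) (σ x₂) (fun hc => hnc (by simpa using hc))
      (by simpa [hinv] using hin _ (h.apply_mem_Y hx₁))
  have hout₂' := h.symm.outDeg_lt (h.apply_mem_Y hx₂) hx₁ hnb₂
  -- so both `x₂` and `σ x₂` have no out-neighbour besides each other, contradicting strongness
  obtain ⟨p, q, hp, hq, hpq⟩ := h.strong.exists_adj (P := fun t => t = x₂ ∨ t = σ x₂)
    (Or.inl rfl) (q := x₁) (by
      rintro (he | he)
      · exact hne he
      · exact h.not_mem_Y hx₁ (he ▸ h.apply_mem_Y hx₂))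
  simp only [not_or] at hq
  rcases hp with rfl | rfl
  · exact absurd (two_le_outDeg (Ne.symm hq.2) (h.adj_apply p) hpq) (by omega)
  · exact absurd (two_le_outDeg (Ne.symm hq.1) (by simpa [hinv] using h.adj_apply (σ x₂)) hpq)
      (by omega)

theorem sameCycle_two (h : Bridgeless A X Y 2 σ) (v w : V) : σ.SameCycle v w := by
  by_contra hvw
  have hinv : ∀ t, σ (σ t) = t := fun t => by_contra fun h2 => hvw <| by
    rcases h.bip.1 t with ht | ht
    · exact (h.sameCycle_two_of_apply_apply_ne ht h2 v).symm.trans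
        (h.sameCycle_two_of_apply_apply_ne ht h2 w)
    · exact (h.symm.sameCycle_two_of_apply_apply_ne ht h2 v).symm.trans
        (h.symm.sameCycle_two_of_apply_apply_ne ht h2 w)
  obtain ⟨p, q, hp, hq, hpq⟩ := h.strong.exists_adj (P := σ.SameCycle v) (.refl σ v) hvw
  have hnc : ¬σ.SameCycle p (σ q) := fun hc => hq (hp.trans (by simpa using hc))
  wlog hpX : p ∈ X generalizing X Y
  · exact this h.symm ((h.bip.1 p).resolve_left hpX)
  exact h.not_adj_apply_two hinv hpX (h.symm.apply_mem_Y (h.mem_Y_of_adj_from hpX hpq)) hnc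
    (by rwa [hinv])

theorem sameCycle (h : Bridgeless A X Y a σ) (v w : V) : σ.SameCycle v w := by
  rcases h.two_le.eq_or_lt with rfl | ha
  · exact h.sameCycle_two v w
  · exact h.sameCycle_of_three_le ha v w

end Bridgeless

theorem Setup.isHamiltonian [Fintype V] (h : Setup A X Y a) : IsHamiltonian A := by
  obtain ⟨σ, hσ, hb⟩ := h.hasCycleFactor.exists_isBridgeless
  exact ⟨σ, hσ, (Bridgeless.mk h hσ hb).sameCycle⟩

end BipartiteHamiltonicity

/-- A strong balanced bipartite digraph on `2a` vertices (`a ≥ 2`) in which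
every dominating pair `{x, y}` satisfies `d(x) ≥ 2a−1, d(y) ≥ a+1` or
`d(y) ≥ 2a−1, d(x) ≥ a+1` is hamiltonian. -/
theorem stmt_0 {V : Type*} (A : V → V → Prop) (V1 V2 : Finset V) (a : ℕ)
    (ha : 2 ≤ a) (hbip : IsBipartition A V1 V2)
    (hV1 : V1.card = a) (hV2 : V2.card = a)
    (hstrong : IsStrong A)
    (hdeg : ∀ x y : V, DominatingPair A x y →
      (2 * a - 1 ≤ deg A x ∧ a + 1 ≤ deg A y) ∨
      (2 * a - 1 ≤ deg A y ∧ a + 1 ≤ deg A x)) :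
    IsHamiltonian A :=
  let _ : Fintype V := ⟨V1 ∪ V2, fun v => mem_union.2 (hbip.1 v)⟩
  BipartiteHamiltonicity.Setup.isHamiltonian ⟨ha, hbip, hV1, hV2, hstrong, hdeg⟩
end

section
/- Let D be a strong bipartite digraph with partite sets V1 and V2, and let C = x0 y0 x1 y1 … x_{m−1} y_{m−1} x0 be a longest cycle in D, where each x_i ∈ V1 and each y_i ∈ V2. Let uv be an arc of D with both u and v not on C, where u ∈ V1 (the same partite set as the x_i). Then for every i (indices modulo m), at most one of the arcs y_i→u and v→x_{i+1} belongs to D. Furthermore, the number of vertices of C that dominate u plus the number of vertices of C dominated by v is at most m. -/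
section Cycles

variable {V : Type*} {A : V → V → Prop}

theorem exists_cycle_of_closed_path {n : ℕ} [NeZero n] (p : ℕ → V)
    (hinj : Set.InjOn p (Set.Iio n)) (harc : ∀ k, k + 1 < n → A (p k) (p (k + 1)))
    (hclose : A (p (n - 1)) (p 0)) :
    ∃ g : ZMod n → V, Function.Injective g ∧ ∀ j, A (g j) (g (j + 1)) := by
  refine ⟨fun j => p j.val, fun j k hjk => ZMod.val_injective n ?_, fun j => ?_⟩
  · exact hinj (ZMod.val_lt j) (ZMod.val_lt k) hjk
  · have hsucc : (j + 1).val = (j.val + 1) % n := by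
      rw [ZMod.val_add, ZMod.val_one_eq_one_mod, Nat.add_mod_mod]
    by_cases hj : j.val + 1 < n
    · simpa only [hsucc, Nat.mod_eq_of_lt hj] using harc _ hj
    · have hlast : j.val = n - 1 := by have := ZMod.val_lt j; omega
      simpa only [hsucc, hlast, Nat.sub_add_cancel NeZero.one_le, Nat.mod_self] using hclose

theorem exists_cycle_of_detour {n : ℕ} (hn : n ≠ 0) (w : ℕ → V) (u v : V)
    (hinj : Set.InjOn w (Set.Iio n)) (harc : ∀ k, k + 1 < n → A (w k) (w (k + 1)))
    (hu : ∀ k < n, w k ≠ u) (hv : ∀ k < n, w k ≠ v) (hne : u ≠ v)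
    (hwu : A (w (n - 1)) u) (huv : A u v) (hvw : A v (w 0)) :
    ∃ g : ZMod (n + 2) → V, Function.Injective g ∧ ∀ j, A (g j) (g (j + 1)) := by
  let p : ℕ → V := fun | 0 => u | 1 => v | k + 2 => w k
  refine exists_cycle_of_closed_path p ?_ ?_ ?_
  · rintro (_ | _ | a) ha (_ | _ | b) hb hab <;> simp only [Set.mem_Iio, p] at ha hb hab
    all_goals first
      | rfl
      | exact absurd hab hne | exact absurd hab.symm hne
      | exact absurd hab (hu _ (by omega)) | exact absurd hab.symm (hu _ (by omega))
      | exact absurd hab (hv _ (by omega)) | exact absurd hab.symm (hv _ (by omega))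
      | rw [hinj (Set.mem_Iio.2 (by omega)) (Set.mem_Iio.2 (by omega)) hab]
  · rintro (_ | _ | k) hk
    exacts [huv, hvw, harc k (by omega)]
  · obtain ⟨k, rfl⟩ := Nat.exists_eq_add_one.2 (Nat.pos_of_ne_zero hn)
    exact hwu

end Cycles

section CycleWalk

variable {V : Type*} {m : ℕ} (x y : ZMod m → V)

/-- `x s, y s, x (s + 1), y (s + 1), …`: the cycle traversed from `x s`. -/
def cycleWalk (s : ZMod m) (k : ℕ) : V :=
  if k % 2 = 0 then x (s + (k / 2 : ℕ)) else y (s + (k / 2 : ℕ))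

variable {x y}

theorem cycleWalk_zero (s : ZMod m) : cycleWalk x y s 0 = x s := by
  simp [cycleWalk]

theorem cycleWalk_two_mul_sub_one [NeZero m] (s : ZMod m) :
    cycleWalk x y s (2 * m - 1) = y (s - 1) := by
  have hm := NeZero.one_le (n := m)
  rw [cycleWalk, if_neg (by omega), show (2 * m - 1) / 2 = m - 1 by omega,
    Nat.cast_sub hm, ZMod.natCast_self, Nat.cast_one, zero_sub, ← sub_eq_add_neg]

theorem cycleWalk_arc {A : V → V → Prop} (harc1 : ∀ i, A (x i) (y i))
    (harc2 : ∀ i, A (y i) (x (i + 1))) (s : ZMod m) (k : ℕ) :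
    A (cycleWalk x y s k) (cycleWalk x y s (k + 1)) := by
  unfold cycleWalk
  rcases Nat.mod_two_eq_zero_or_one k with hk | hk
  · rw [if_pos hk, if_neg (by omega), show (k + 1) / 2 = k / 2 by omega]
    exact harc1 _
  · rw [if_neg (by omega), if_pos (by omega), show (k + 1) / 2 = k / 2 + 1 by omega,
      Nat.cast_succ, ← add_assoc]
    exact harc2 _

theorem cycleWalk_injOn (hxinj : Function.Injective x) (hyinj : Function.Injective y)
    (hxy : ∀ i j, x i ≠ y j) (s : ZMod m) :
    Set.InjOn (cycleWalk x y s) (Set.Iio (2 * m)) := by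
  intro a ha b hb hab
  simp only [Set.mem_Iio] at ha hb
  have hcast : ((a / 2 : ℕ) : ZMod m) = (b / 2 : ℕ) → a / 2 = b / 2 := fun h => by
    simpa [ZMod.val_cast_of_lt (show a / 2 < m by omega),
      ZMod.val_cast_of_lt (show b / 2 < m by omega)] using congrArg ZMod.val h
  unfold cycleWalk at hab
  split_ifs at hab
  · have := hcast (add_left_cancel (hxinj hab)); omega
  · exact absurd hab (hxy _ _)
  · exact absurd hab.symm (hxy _ _)
  · have := hcast (add_left_cancel (hyinj hab)); omega

theorem cycleWalk_ne {z : V} (hz : ∀ i, z ≠ x i ∧ z ≠ y i) (s : ZMod m) (k : ℕ) :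
    cycleWalk x y s k ≠ z := by
  unfold cycleWalk
  split_ifs
  exacts [(hz _).1.symm, (hz _).2.symm]

end CycleWalk

namespace IsBipartition

variable {V : Type*} {A : V → V → Prop} {V1 V2 : Finset V} {a b : V}

theorem mem_right_of_arc (h : IsBipartition A V1 V2) (hab : A a b) (ha : a ∈ V1) : b ∈ V2 :=
  (h.1 b).resolve_left fun hb => h.2.2.1 a ha b hb hab

theorem ne_of_mem_left_of_mem_right (h : IsBipartition A V1 V2) (ha : a ∈ V1) (hb : b ∈ V2) :
    a ≠ b :=
  fun hab => Finset.disjoint_left.mp h.2.1 ha (hab ▸ hb)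

theorem not_arc_of_mem_left (h : IsBipartition A V1 V2) (ha : a ∈ V1) (hb : b ∈ V1) :
    ¬ A a b :=
  h.2.2.1 a ha b hb

theorem not_arc_of_mem_right (h : IsBipartition A V1 V2) (ha : a ∈ V2) (hb : b ∈ V2) :
    ¬ A a b :=
  h.2.2.2 a ha b hb

end IsBipartition

section Counting

variable {ι V : Type*} {x y : ι → V} {P : V → Prop}

theorem setOf_exists_eq_or_eq_and_eq_image_right (hx : ∀ i, ¬ P (x i)) :
    {z | (∃ i, z = x i ∨ z = y i) ∧ P z} = y '' {i | P (y i)} := by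
  ext z
  constructor
  · rintro ⟨⟨i, rfl | rfl⟩, hz⟩
    exacts [absurd hz (hx i), ⟨i, hz, rfl⟩]
  · rintro ⟨i, hi, rfl⟩
    exact ⟨⟨i, Or.inr rfl⟩, hi⟩

theorem setOf_exists_eq_or_eq_and_eq_image_left (hy : ∀ i, ¬ P (y i)) :
    {z | (∃ i, z = x i ∨ z = y i) ∧ P z} = x '' {i | P (x i)} := by
  simp_rw [or_comm (a := _ = x _)]
  exact setOf_exists_eq_or_eq_and_eq_image_right hy

theorem ncard_add_ncard_le_of_not_and_add_one {m : ℕ} [NeZero m] {P Q : ZMod m → Prop}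
    (h : ∀ i, ¬ (P i ∧ Q (i + 1))) : {i | P i}.ncard + {j | Q j}.ncard ≤ m := by
  have hshift : {j | Q j}.ncard = {i | Q (i + 1)}.ncard :=
    (Set.ncard_preimage_of_injective_subset_range (add_left_injective 1)
      fun j _ => ⟨j - 1, sub_add_cancel j 1⟩).symm
  have hdisj : Disjoint {i | P i} {i | Q (i + 1)} :=
    Set.disjoint_left.2 fun i hP hQ => h i ⟨hP, hQ⟩
  rw [hshift, ← Set.ncard_union_eq hdisj]
  exact (Set.ncard_le_card _).trans_eq (Nat.card_zmod m)

end Counting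

theorem stmt_4_general {V : Type*} (A : V → V → Prop) (V1 V2 : Finset V)
    (hbip : IsBipartition A V1 V2)
    (m : ℕ) [NeZero m] (x y : ZMod m → V)
    (hx : ∀ i, x i ∈ V1) (hy : ∀ i, y i ∈ V2)
    (hxinj : Function.Injective x) (hyinj : Function.Injective y)
    (harc1 : ∀ i, A (x i) (y i)) (harc2 : ∀ i, A (y i) (x (i + 1)))
    (hlongest : ∀ (n : ℕ) (g : ZMod n → V), 2 ≤ n → Function.Injective g →
      (∀ i, A (g i) (g (i + 1))) → n ≤ 2 * m)
    (u v : V) (huv : A u v) (hu1 : u ∈ V1)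
    (hu : ∀ i, u ≠ x i ∧ u ≠ y i) (hv : ∀ i, v ≠ x i ∧ v ≠ y i) :
    (∀ i : ZMod m, ¬ (A (y i) u ∧ A v (x (i + 1)))) ∧
    {z : V | (∃ i, z = x i ∨ z = y i) ∧ A z u}.ncard +
      {z : V | (∃ i, z = x i ∨ z = y i) ∧ A v z}.ncard ≤ m := by
  have hv2 : v ∈ V2 := hbip.mem_right_of_arc huv hu1
  have hxy : ∀ i j, x i ≠ y j := fun i j => hbip.ne_of_mem_left_of_mem_right (hx i) (hy j)
  have hnot_both : ∀ i, ¬ (A (y i) u ∧ A v (x (i + 1))) := by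
    rintro i ⟨hyu, hvx⟩
    obtain ⟨g, hg, hgA⟩ := exists_cycle_of_detour (n := 2 * m) (by simp [NeZero.ne m])
      (cycleWalk x y (i + 1)) u v (cycleWalk_injOn hxinj hyinj hxy _)
      (fun k _ => cycleWalk_arc harc1 harc2 _ k) (fun k _ => cycleWalk_ne hu _ k)
      (fun k _ => cycleWalk_ne hv _ k) (hbip.ne_of_mem_left_of_mem_right hu1 hv2)
      (by rwa [cycleWalk_two_mul_sub_one, add_sub_cancel_right]) huv (by rwa [cycleWalk_zero])
    have hle := hlongest _ g (by omega) hg hgA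
    omega
  refine ⟨hnot_both, ?_⟩
  rw [setOf_exists_eq_or_eq_and_eq_image_right (P := (A · u))
      fun i => hbip.not_arc_of_mem_left (hx i) hu1,
    setOf_exists_eq_or_eq_and_eq_image_left (P := A v)
      fun i => hbip.not_arc_of_mem_right hv2 (hy i),
    Set.ncard_image_of_injective _ hyinj, Set.ncard_image_of_injective _ hxinj]
  exact ncard_add_ncard_le_of_not_and_add_one hnot_both

/-- Let `C = x₀y₀x₁y₁⋯x_{m−1}y_{m−1}x₀` be a longest cycle in a strong
bipartite digraph `D` (with `xᵢ ∈ V1`, `yᵢ ∈ V2`), and let `u → v` be an arc of `D`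
with `u, v ∉ V(C)` and `u ∈ V1`. Then for each `i`, at most one of the arcs `yᵢ → u`
and `v → x_{i+1}` is in `D`; moreover the number of vertices of `C` dominating `u`
plus the number of vertices of `C` dominated by `v` is at most `m`. -/
theorem stmt_4 {V : Type*} (A : V → V → Prop) (V1 V2 : Finset V)
    (hbip : IsBipartition A V1 V2) (hstrong : IsStrong A)
    (m : ℕ) [NeZero m] (x y : ZMod m → V)
    (hx : ∀ i, x i ∈ V1) (hy : ∀ i, y i ∈ V2)
    (hxinj : Function.Injective x) (hyinj : Function.Injective y)
    (harc1 : ∀ i, A (x i) (y i)) (harc2 : ∀ i, A (y i) (x (i + 1)))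
    (hlongest : ∀ (n : ℕ) (g : ZMod n → V), 2 ≤ n → Function.Injective g →
      (∀ i, A (g i) (g (i + 1))) → n ≤ 2 * m)
    (u v : V) (huv : A u v) (hu1 : u ∈ V1)
    (hu : ∀ i, u ≠ x i ∧ u ≠ y i) (hv : ∀ i, v ≠ x i ∧ v ≠ y i) :
    (∀ i : ZMod m, ¬ (A (y i) u ∧ A v (x (i + 1)))) ∧
    {z : V | (∃ i, z = x i ∨ z = y i) ∧ A z u}.ncard +
      {z : V | (∃ i, z = x i ∨ z = y i) ∧ A v z}.ncard ≤ m :=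
  stmt_4_general A V1 V2 hbip m x y hx hy hxinj hyinj harc1 harc2 hlongest u v huv hu1 hu hv
end

section
/- Let D be a strong balanced bipartite digraph with partite sets V1 and V2, each of cardinality a, where a ≥ 3. Suppose that for every dominating pair of vertices {x, y} of D, either d(x) ≥ 2a−2 and d(y) ≥ a+1, or d(y) ≥ 2a−2 and d(x) ≥ a+1. Then D contains a directed cycle of length at least 4. -/
/-!
If some arc `x → y` has no reverse arc, an injective path from `y` back to `x` closes a cycle
through `x → y`; it has at least three arcs since `y ↛ x`, and bipartiteness excludes three.
Otherwise the digraph is symmetric. The degree condition forces degree at least `3` on both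
vertices of a dominating pair, which together with strong connectivity gives every vertex two
out-neighbours. The last vertex of a longest path then has an arc back to a vertex at least two
steps earlier, and bipartiteness again excludes a cycle of length `3`.
-/

section DiPath

variable {V : Type*} {A : V → V → Prop}

def IsDiPath (A : V → V → Prop) (g : ℕ → V) (m : ℕ) : Prop :=
  Set.InjOn g (Set.Iic m) ∧ ∀ i < m, A (g i) (g (i + 1))

namespace IsDiPath

variable {g : ℕ → V} {m : ℕ}

lemma zero (g : ℕ → V) : IsDiPath A g 0 :=
  ⟨fun i hi j hj _ => by simp_all, fun i hi => absurd hi (Nat.not_lt_zero i)⟩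

lemma take (hg : IsDiPath A g m) {k : ℕ} (hk : k ≤ m) : IsDiPath A g k :=
  ⟨hg.1.mono (Set.Iic_subset_Iic.mpr hk), fun i hi => hg.2 i (by omega)⟩

lemma drop (hg : IsDiPath A g m) {k : ℕ} (hk : k ≤ m) :
    IsDiPath A (fun i => g (k + i)) (m - k) := by
  refine ⟨fun i hi j hj hij => ?_, fun i hi => hg.2 (k + i) (by omega)⟩
  have := hg.1 (show k + i ≤ m by simp at hi; omega) (show k + j ≤ m by simp at hj; omega) hij
  omega

lemma snoc (hg : IsDiPath A g m) {w : V} (hw : A (g m) w) (hnew : ∀ i ≤ m, g i ≠ w) :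
    IsDiPath A (fun i => if i ≤ m then g i else w) (m + 1) := by
  refine ⟨fun i hi j hj hij => ?_, fun i hi => ?_⟩
  · simp only [Set.mem_Iic] at hi hj
    simp only at hij
    split_ifs at hij with h₁ h₂ h₂
    · exact hg.1 h₁ h₂ hij
    · exact absurd hij (hnew i h₁)
    · exact absurd hij.symm (hnew j h₂)
    · omega
  · by_cases him : i + 1 ≤ m
    · simpa [him, show i ≤ m by omega] using hg.2 i him
    · obtain rfl : i = m := by omega
      simpa using hw

lemma card_lt [Fintype V] (hg : IsDiPath A g m) : m < Fintype.card V := by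
  have := Finset.card_le_card_of_injOn g (s := Finset.Iic m) (t := Finset.univ)
    (fun _ _ => Finset.mem_univ _) (by simpa using hg.1)
  simp only [Nat.card_Iic, Finset.card_univ] at this
  omega

lemma exists_cycle (hg : IsDiPath A g m) (hback : A (g m) (g 0)) :
    ∃ c : ZMod (m + 1) → V, Function.Injective c ∧ ∀ i, A (c i) (c (i + 1)) := by
  refine ⟨fun i => g i.val, fun i j hij => ZMod.val_injective _ ?_, fun i => ?_⟩
  · exact hg.1 (Nat.le_of_lt_succ i.val_lt) (Nat.le_of_lt_succ j.val_lt) hij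
  have hsucc : (i + 1).val = (i.val + 1) % (m + 1) := by
    rw [ZMod.val_add, ZMod.val_one_eq_one_mod, Nat.add_mod_mod]
  rcases (Nat.le_of_lt_succ i.val_lt).lt_or_eq with hi | hi
  · simpa [hsucc, Nat.mod_eq_of_lt (Nat.succ_lt_succ hi)] using hg.2 _ hi
  · simpa [hsucc, hi] using hback

end IsDiPath

lemma exists_isDiPath_of_reflTransGen {x y : V} (h : Relation.ReflTransGen A x y) :
    ∃ g m, g 0 = x ∧ g m = y ∧ IsDiPath A g m := by
  induction h with
  | refl => exact ⟨fun _ => x, 0, rfl, rfl, IsDiPath.zero _⟩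
  | @tail b c _ hbc ih =>
    obtain ⟨g, m, hg0, rfl, hg⟩ := ih
    by_cases hnew : ∀ i ≤ m, g i ≠ c
    · exact ⟨_, m + 1, by simpa using hg0, by simp, hg.snoc hbc hnew⟩
    · push Not at hnew
      obtain ⟨i, hi, rfl⟩ := hnew
      exact ⟨g, i, hg0, rfl, hg.take hi⟩

/-- A longest path cannot be extended, so both out-neighbours of its last vertex lie on it,
and one of them is not its predecessor. -/
lemma exists_isDiPath_back_arc [Finite V] [Nonempty V] (hirr : ∀ v, ¬ A v v)
    (hout : ∀ v, ∃ w₁ w₂, w₁ ≠ w₂ ∧ A v w₁ ∧ A v w₂) :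
    ∃ g m, 2 ≤ m ∧ IsDiPath A g m ∧ A (g m) (g 0) := by
  classical
  have : Fintype V := Fintype.ofFinite V
  let P : ℕ → Prop := fun k => ∃ g, IsDiPath A g k
  obtain ⟨g, hg⟩ : P (Nat.findGreatest P (Fintype.card V)) :=
    Nat.findGreatest_spec (Nat.zero_le _) ⟨fun _ => Classical.arbitrary V, IsDiPath.zero _⟩
  set m := Nat.findGreatest P (Fintype.card V)
  have hmax : ∀ w, A (g m) w → ∃ i ≤ m, g i = w := by
    intro w hw
    by_contra! hnew
    have hlong : P (m + 1) := ⟨_, hg.snoc hw hnew⟩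
    have := Nat.le_findGreatest (hg.snoc hw hnew).card_lt.le hlong
    omega
  obtain ⟨w₁, w₂, hne, h₁, h₂⟩ := hout (g m)
  obtain ⟨i, hi, rfl⟩ := hmax _ h₁
  obtain ⟨j, hj, rfl⟩ := hmax _ h₂
  have him : i ≠ m := by rintro rfl; exact hirr _ h₁
  have hjm : j ≠ m := by rintro rfl; exact hirr _ h₂
  obtain ⟨k, hk, hback⟩ : ∃ k, k + 2 ≤ m ∧ A (g m) (g k) := by
    by_cases hik : i + 2 ≤ m
    · exact ⟨i, hik, h₁⟩
    · exact ⟨j, by by_contra; exact hne (congrArg g (by omega)), h₂⟩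
  refine ⟨fun t => g (k + t), m - k, by omega, hg.drop (by omega), ?_⟩
  simpa [Nat.add_sub_cancel' (by omega : k ≤ m)] using hback

end DiPath

namespace IsBipartition

variable {V : Type*} {A : V → V → Prop} {V1 V2 : Finset V}

lemma finite (hbip : IsBipartition A V1 V2) : Finite V :=
  Set.finite_univ_iff.mp <| (V1.finite_toSet.union V2.finite_toSet).subset fun v _ => hbip.1 v

lemma irrefl (hbip : IsBipartition A V1 V2) (v : V) : ¬ A v v := by
  obtain ⟨hcover, -, hind1, hind2⟩ := hbip
  rcases hcover v with hv | hv
  · exact hind1 v hv v hv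
  · exact hind2 v hv v hv

lemma not_rel_of_rel_rel (hbip : IsBipartition A V1 V2) {u v w : V}
    (huv : A u v) (hvw : A v w) : ¬ A w u := by
  obtain ⟨hcover, -, hind1, hind2⟩ := hbip
  rcases hcover u with hu | hu <;> rcases hcover v with hv | hv <;>
    rcases hcover w with hw | hw
  all_goals intro hwu; first
    | exact hind1 u hu v hv huv | exact hind2 u hu v hv huv
    | exact hind1 v hv w hw hvw | exact hind2 v hv w hw hvw
    | exact hind1 w hw u hu hwu | exact hind2 w hw u hu hwu

lemma exists_cycle_of_isDiPath (hbip : IsBipartition A V1 V2) {g : ℕ → V} {m : ℕ}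
    (hg : IsDiPath A g m) (hm : 2 ≤ m) (hback : A (g m) (g 0)) :
    ∃ (n : ℕ) (c : ZMod n → V), 4 ≤ n ∧ Function.Injective c ∧
      ∀ i, A (c i) (c (i + 1)) := by
  have hm_ne : m ≠ 2 := by
    rintro rfl
    exact hbip.not_rel_of_rel_rel (hg.2 0 (by omega)) (hg.2 1 (by omega)) hback
  obtain ⟨c, hc⟩ := hg.exists_cycle hback
  exact ⟨m + 1, c, by omega, hc⟩

end IsBipartition

section Symmetric

variable {V : Type*} {A : V → V → Prop}

lemma deg_le_two_of_symmetric (hsymm : ∀ x y, A x y → A y x) {v w : V}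
    (hv : ∀ y, A v y → y = w) : deg A v ≤ 2 := by
  have hout : Subsingleton {y // A v y} :=
    ⟨fun y z => Subtype.ext ((hv _ y.2).trans (hv _ z.2).symm)⟩
  have hin : Subsingleton {y // A y v} :=
    ⟨fun y z => Subtype.ext ((hv _ (hsymm _ _ y.2)).trans (hv _ (hsymm _ _ z.2)).symm)⟩
  have h₁ := Finite.card_le_one_iff_subsingleton.mpr hout
  have h₂ := Finite.card_le_one_iff_subsingleton.mpr hin
  unfold deg
  omega

/-- If `v` had a single neighbour `w`, then `v` would form a dominating pair with any other
neighbour of `w`; so `w` has none, and strong connectivity confines the digraph to `{v, w}`. -/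
lemma exists_two_outNeighbours_of_symmetric [Finite V] (hsymm : ∀ x y, A x y → A y x)
    (hstrong : IsStrong A) (hcard : 2 < Nat.card V)
    (hdeg : ∀ x y, DominatingPair A x y → 3 ≤ deg A x) (v : V) :
    ∃ w₁ w₂, w₁ ≠ w₂ ∧ A v w₁ ∧ A v w₂ := by
  classical
  have : Fintype V := Fintype.ofFinite V
  have : Nontrivial V := Finite.one_lt_card_iff_nontrivial.mp (by omega)
  obtain ⟨u, huv⟩ := exists_ne v
  obtain ⟨w, hvw, -⟩ := (hstrong v u).cases_head.resolve_left huv.symm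
  by_contra! htwo
  have hv : ∀ y, A v y → y = w := fun y hy => by_contra fun hyw => htwo y w hyw hy hvw
  have hdeg_v : deg A v ≤ 2 := deg_le_two_of_symmetric hsymm hv
  have hw : ∀ z, A w z → z = v := fun z hwz => by_contra fun hzv => by
    have := hdeg v z ⟨Ne.symm hzv, w, hvw, hsymm _ _ hwz⟩
    omega
  have hclosed : ∀ t, Relation.ReflTransGen A v t → t = v ∨ t = w := by
    intro t ht
    induction ht with
    | refl => exact Or.inl rfl
    | tail _ hst ih =>
      rcases ih with rfl | rfl
      · exact Or.inr (hv _ hst)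
      · exact Or.inl (hw _ hst)
  obtain ⟨t, -, ht⟩ := Finset.exists_mem_notMem_of_card_lt_card (s := {v, w}) (t := Finset.univ)
    (by rw [Finset.card_univ, ← Nat.card_eq_fintype_card]
        exact Finset.card_le_two.trans_lt hcard)
  rcases hclosed t (hstrong v t) with rfl | rfl <;> simp at ht

end Symmetric

theorem stmt_5_general {V : Type*} (A : V → V → Prop) (V1 V2 : Finset V) (a : ℕ)
    (ha : 3 ≤ a) (hbip : IsBipartition A V1 V2)
    (hV1 : V1.card = a)
    (hstrong : IsStrong A)
    (hdeg : ∀ x y : V, DominatingPair A x y →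
      (2 * a - 2 ≤ deg A x ∧ a + 1 ≤ deg A y) ∨
      (2 * a - 2 ≤ deg A y ∧ a + 1 ≤ deg A x)) :
    ∃ (n : ℕ) (g : ZMod n → V), 4 ≤ n ∧ Function.Injective g ∧
      ∀ i, A (g i) (g (i + 1)) := by
  have := hbip.finite
  by_cases hsymm : ∀ x y, A x y → A y x
  · have hcard : 2 < Nat.card V := by
      have : Fintype V := Fintype.ofFinite V
      rw [Nat.card_eq_fintype_card]
      exact (by omega : 2 < V1.card).trans_le V1.card_le_univ
    have hdeg3 : ∀ x y, DominatingPair A x y → 3 ≤ deg A x := fun x y hxy => by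
      rcases hdeg x y hxy with h | h <;> omega
    have : Nonempty V := Finite.card_pos_iff.mp (by omega)
    obtain ⟨g, m, hm, hg, hback⟩ := exists_isDiPath_back_arc hbip.irrefl
      (exists_two_outNeighbours_of_symmetric hsymm hstrong hcard hdeg3)
    exact hbip.exists_cycle_of_isDiPath hg hm hback
  · obtain ⟨x, y, hxy, hyx⟩ : ∃ x y, A x y ∧ ¬ A y x := by
      simpa using hsymm
    obtain ⟨g, m, rfl, rfl, hg⟩ := exists_isDiPath_of_reflTransGen (hstrong y x)
    have hm : 2 ≤ m := by
      by_contra! hm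
      interval_cases m
      · exact hbip.irrefl _ hxy
      · exact hyx (hg.2 0 Nat.one_pos)
    exact hbip.exists_cycle_of_isDiPath hg hm hxy

/-- A strong balanced bipartite digraph with parts of size `a ≥ 3`
satisfying the `B`-type degree condition (`2a−2`, `a+1`) on dominating pairs contains
a directed cycle of length at least `4`. -/
theorem stmt_5 {V : Type*} (A : V → V → Prop) (V1 V2 : Finset V) (a : ℕ)
    (ha : 3 ≤ a) (hbip : IsBipartition A V1 V2)
    (hV1 : V1.card = a) (hV2 : V2.card = a)
    (hstrong : IsStrong A)
    (hdeg : ∀ x y : V, DominatingPair A x y →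
      (2 * a - 2 ≤ deg A x ∧ a + 1 ≤ deg A y) ∨
      (2 * a - 2 ≤ deg A y ∧ a + 1 ≤ deg A x)) :
    ∃ (n : ℕ) (g : ZMod n → V), 4 ≤ n ∧ Function.Injective g ∧
      ∀ i, A (g i) (g (i + 1)) :=
  stmt_5_general A V1 V2 a ha hbip hV1 hstrong hdeg
end

section
/- The digraph H1 is a strong balanced bipartite digraph on 2a = 4 vertices that satisfies the following condition: for every dominating pair of vertices {x, y}, either d(x) ≥ 2a−2 and d(y) ≥ a+1, or d(y) ≥ 2a−2 and d(x) ≥ a+1; nevertheless, H1 contains no hamiltonian cycle. -/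
/-!
`H1` is the path `x1 — y1 — x2 — y2` with every edge doubled into a 2-cycle, so it is strong and
bipartite. Every dominating pair contains `x2` or `y1`, the two vertices of degree `4 = 2a`, and
the other vertex has degree `2 = 2a - 2`. But `x1` has `y1` as its only out- and in-neighbour, so
every cycle factor contains the 2-cycle `x1 y1`, and there is no hamiltonian cycle.
-/

open Equiv Set

namespace Equiv.Perm

theorem SameCycle.mem_of_mapsTo {α : Type*} [Finite α] {σ : Perm α} {s : Set α} {x y : α}
    (hs : MapsTo σ s s) (h : σ.SameCycle x y) (hx : x ∈ s) : y ∈ s := by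
  obtain ⟨n, -, rfl⟩ := h.exists_pow_eq'
  exact hs.perm_pow n hx

end Equiv.Perm

section Digraph

variable {V : Type*} {A : V → V → Prop}

theorem deg_eq_card_filter [Fintype V] [DecidableRel A] (x : V) :
    deg A x = (Finset.univ.filter (A x ·)).card + (Finset.univ.filter (A · x)).card := by
  simp only [deg, Nat.card_eq_fintype_card, Fintype.card_subtype]

theorem isStrong_of_reachable [Std.Symm A] {v : V}
    (hv : ∀ y, Relation.ReflTransGen A v y) : IsStrong A :=
  fun x y => (Std.Symm.symm _ _ (hv x)).trans (hv y)

/-- A vertex `x` whose only out- and in-neighbour is `y` lies on a 2-cycle of every cycle factor. -/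
theorem not_isHamiltonian_of_unique_neighbour [Finite V] {x y z : V}
    (hout : ∀ w, A x w → w = y) (hin : ∀ w, A w x → w = y) (hzx : z ≠ x) (hzy : z ≠ y) :
    ¬ IsHamiltonian A := by
  rintro ⟨σ, hσ, hcyc⟩
  have hx : σ x = y := hout _ (hσ x)
  have hy : σ y = x := by
    have : σ.symm x = y := hin _ (by simpa using hσ (σ.symm x))
    rw [← this, σ.apply_symm_apply]
  have hmaps : MapsTo σ {x, y} {x, y} := by
    rintro v (rfl | rfl) <;> simp [hx, hy]
  rcases (hcyc x z).mem_of_mapsTo hmaps (by simp) with h | h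
  exacts [hzx h, hzy h]

end Digraph

instance (i j : Fin 4) : Decidable (H1Adj i j) := by unfold H1Adj; infer_instance

instance : Std.Symm H1Adj := ⟨by decide⟩

theorem isStrong_H1Adj : IsStrong H1Adj := by
  refine isStrong_of_reachable (v := 2) fun y => ?_
  have h20 : H1Adj 2 0 := by decide
  have h21 : H1Adj 2 1 := by decide
  have h13 : H1Adj 1 3 := by decide
  fin_cases y
  · exact .single h20
  · exact .single h21
  · exact .refl
  · exact .tail (.single h21) h13

theorem deg_H1Adj (x : Fin 4) : deg H1Adj x = if x = 1 ∨ x = 2 then 4 else 2 := by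
  rw [deg_eq_card_filter]
  revert x
  decide

theorem DominatingPair.H1Adj_mem {x y : Fin 4} (h : DominatingPair H1Adj x y) :
    (x = 1 ∨ x = 2) ∨ (y = 1 ∨ y = 2) := by
  obtain ⟨hne, z, hx, hy⟩ := h
  revert x y z
  decide

theorem not_isHamiltonian_H1Adj : ¬ IsHamiltonian H1Adj :=
  not_isHamiltonian_of_unique_neighbour (x := 0) (y := 2) (z := 1)
    (by decide) (by decide) (by decide) (by decide)

/-- `H1` is a strong balanced bipartite digraph on `2a = 4` vertices
satisfying the degree condition (`d(x) ≥ 2a−2, d(y) ≥ a+1` or symmetrically) for every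
dominating pair, yet it has no hamiltonian cycle. -/
theorem stmt_7 :
    IsStrong H1Adj ∧
    IsBipartition H1Adj ({0, 1} : Finset (Fin 4)) ({2, 3} : Finset (Fin 4)) ∧
    ({0, 1} : Finset (Fin 4)).card = 2 ∧ ({2, 3} : Finset (Fin 4)).card = 2 ∧
    (∀ x y : Fin 4, DominatingPair H1Adj x y →
      (2 * 2 - 2 ≤ deg H1Adj x ∧ 2 + 1 ≤ deg H1Adj y) ∨
      (2 * 2 - 2 ≤ deg H1Adj y ∧ 2 + 1 ≤ deg H1Adj x)) ∧
    ¬ IsHamiltonian H1Adj := by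
  refine ⟨isStrong_H1Adj, by unfold IsBipartition; decide, rfl, rfl, ?_, not_isHamiltonian_H1Adj⟩
  intro x y hxy
  rw [deg_H1Adj, deg_H1Adj]
  rcases hxy.H1Adj_mem with hx | hy
  · right; simp only [hx, if_true]; split_ifs <;> omega
  · left; simp only [hy, if_true]; split_ifs <;> omega
end
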